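/- Let (g,a) be a normalized Γ-cocycle with respect to a cover {U_i}_{i∈I} of a set X. Then the following data form a groupoid 𝒫_{(g,a)}: objects are triples (i,x,g) with i ∈ I, x ∈ U_i and g ∈ G; morphisms from (j,x,g) to (i,x', g') exist only if x = x' ∈ U_i ∩ U_j and are quintuples (i,j,x,h,g) with h ∈ H such that g' = g_{ij}(x)⁻¹·t(h)·g; the identity at (i,x,g) is (i,i,x,1,g); and the composition is (i,j,x,h₂,g₂)∘(j,k,x,h₁,g₁) := (i,k,x, a_{ijk}(x)·α(g_{jk}(x),h₂)·h₁, g₁), defined whenever g₂ = g_{jk}(x)⁻¹·t(h₁)·g₁. In particular, the composition is associative and unital, and every morphism has a two-sided inverse. (This is the reconstruction of the total space groupoid from a cocycle in Section 3.2 of the paper.) -/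

import Mathlib

/-!
The arrows of `𝒫_{(g,a)}` over a point `x` are governed entirely by the two cocycle identities.
Applying `t` to a composite and using equivariance together with
`g_{ik} = t(a_{ijk}) g_{jk} g_{ij}` shows that composites have the right target; associativity
is the identity for `a` after moving `α(g_{jl}, -)` across `g_{jl} = t(a_{jkl}) g_{kl} g_{jk}`
with the Peiffer identity. Normalization makes `(i,i,x,1,g)` a two-sided unit and gives
`g_{ji} = g_{ij}⁻¹`, so that `(j,i,x,α(g_{ij}⁻¹, h⁻¹),·)` inverts `(i,j,x,h,g)`.
-/

/-- A crossed module of groups. -/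
structure CrossedModule (G H : Type*) [Group G] [Group H] where
  t : H → G
  α : G → H → H
  t_mul : ∀ h₁ h₂ : H, t (h₁ * h₂) = t h₁ * t h₂
  α_one : ∀ h : H, α 1 h = h
  α_mul : ∀ (g₁ g₂ : G) (h : H), α (g₁ * g₂) h = α g₁ (α g₂ h)
  α_hom : ∀ (g : G) (h₁ h₂ : H), α g (h₁ * h₂) = α g h₁ * α g h₂
  peiffer : ∀ h x : H, α (t h) x = h * x * h⁻¹
  equivariance : ∀ (g : G) (h : H), t (α g h) = g * t h * g⁻¹

/-- A `Γ`-cocycle with respect to a family of subsets `U : I → Set X`, for the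
Lie 2-group `Γ` associated to a crossed module `(G,H,t,α)`. -/
structure GammaCocycle {G H : Type*} [Group G] [Group H] (cm : CrossedModule G H)
    {X I : Type*} (U : I → Set X) where
  g : I → I → X → G
  a : I → I → I → X → H
  cocycle_g : ∀ (i j k : I) (x : X), x ∈ U i → x ∈ U j → x ∈ U k →
    g i k x = cm.t (a i j k x) * g j k x * g i j x
  cocycle_a : ∀ (i j k l : I) (x : X), x ∈ U i → x ∈ U j → x ∈ U k → x ∈ U l →
    a i k l x * cm.α (g k l x) (a i j k x) = a i j l x * a j k l x

namespace CrossedModule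

variable {G H : Type*} [Group G] [Group H] (cm : CrossedModule G H)

lemma t_one : cm.t 1 = 1 := by
  simpa using cm.t_mul 1 1

lemma t_inv (h : H) : cm.t h⁻¹ = (cm.t h)⁻¹ := by
  refine eq_inv_of_mul_eq_one_left ?_
  rw [← cm.t_mul, inv_mul_cancel, cm.t_one]

lemma α_apply_one (g : G) : cm.α g 1 = 1 := by
  simpa using cm.α_hom g 1 1

lemma α_apply_inv (g : G) (h : H) : cm.α g h⁻¹ = (cm.α g h)⁻¹ := by
  refine eq_inv_of_mul_eq_one_left ?_
  rw [← cm.α_hom, inv_mul_cancel, cm.α_apply_one]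

lemma α_α_inv_apply (g : G) (h : H) : cm.α g (cm.α g⁻¹ h) = h := by
  rw [← cm.α_mul, mul_inv_cancel, cm.α_one]

lemma α_t_mul (a : H) (g : G) (h : H) : cm.α (cm.t a * g) h = a * cm.α g h * a⁻¹ := by
  rw [cm.α_mul, cm.peiffer]

end CrossedModule

namespace GammaCocycle

variable {G H : Type*} [Group G] [Group H] {cm : CrossedModule G H} {X I : Type*}
  {U : I → Set X} (c : GammaCocycle cm U) {i j k l : I} {x : X}

/-- The `G`-component of the target `(i,x,·)` of the arrow `(i,j,x,h,g)`. -/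
def tgt (i j : I) (x : X) (h : H) (g : G) : G := (c.g i j x)⁻¹ * cm.t h * g

/-- The `H`-component of the composite `(i,j,x,h₂,g₂) ∘ (j,k,x,h₁,g₁)`. -/
def comp (i j k : I) (x : X) (h₂ h₁ : H) : H := c.a i j k x * cm.α (c.g j k x) h₂ * h₁

/-- The `H`-component of the inverse `(j,i,x,·,·)` of the arrow `(i,j,x,h,g)`. -/
def inv (i j : I) (x : X) (h : H) : H := cm.α (c.g i j x)⁻¹ h⁻¹

lemma tgt_comp (hi : x ∈ U i) (hj : x ∈ U j) (hk : x ∈ U k) (h₂ h₁ : H) (g : G) :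
    c.tgt i k x (c.comp i j k x h₂ h₁) g = c.tgt i j x h₂ (c.tgt j k x h₁ g) := by
  simp only [tgt, comp]
  rw [cm.t_mul, cm.t_mul, cm.equivariance, c.cocycle_g i j k x hi hj hk]
  group

lemma comp_assoc (hi : x ∈ U i) (hj : x ∈ U j) (hk : x ∈ U k) (hl : x ∈ U l)
    (h₃ h₂ h₁ : H) :
    c.comp i j l x h₃ (c.comp j k l x h₂ h₁) = c.comp i k l x (c.comp i j k x h₃ h₂) h₁ := by
  simp only [comp]
  rw [c.cocycle_g j k l x hj hk hl, mul_assoc (cm.t _), cm.α_t_mul, cm.α_mul, cm.α_hom, cm.α_hom,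
    ← mul_assoc (c.a i k l x), ← mul_assoc (c.a i k l x), c.cocycle_a i j k l x hi hj hk hl]
  group

lemma tgt_one (hii : c.g i i x = 1) (g : G) : c.tgt i i x 1 g = g := by
  rw [tgt, hii, cm.t_one, inv_one, one_mul, one_mul]

lemma comp_one (hjj : c.g j j x = 1) (hijj : c.a i j j x = 1) (h : H) :
    c.comp i j j x h 1 = h := by
  rw [comp, hjj, hijj, cm.α_one, one_mul, mul_one]

lemma one_comp (hiij : c.a i i j x = 1) (h : H) : c.comp i i j x 1 h = h := by
  rw [comp, hiij, cm.α_apply_one, one_mul, one_mul]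

lemma g_swap_eq_inv (hi : x ∈ U i) (hj : x ∈ U j) (hii : c.g i i x = 1) (hiji : c.a i j i x = 1) :
    c.g j i x = (c.g i j x)⁻¹ := by
  refine eq_inv_of_mul_eq_one_left ?_
  rw [← hii, c.cocycle_g i j i x hi hj hi, hiji, cm.t_one, one_mul]

lemma tgt_inv (hji : c.g j i x = (c.g i j x)⁻¹) (h : H) (g : G) :
    c.tgt j i x (c.inv i j x h) (c.tgt i j x h g) = g := by
  rw [tgt, tgt, inv, hji, cm.equivariance, cm.t_inv]
  group

lemma inv_comp (hjij : c.a j i j x = 1) (h : H) : c.comp j i j x (c.inv i j x h) h = 1 := by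
  rw [comp, inv, hjij, one_mul, cm.α_α_inv_apply, inv_mul_cancel]

lemma comp_inv (hji : c.g j i x = (c.g i j x)⁻¹) (hiji : c.a i j i x = 1) (h : H) :
    c.comp i j i x h (c.inv i j x h) = 1 := by
  rw [comp, inv, hji, hiji, one_mul, cm.α_apply_inv, mul_inv_cancel]

end GammaCocycle

theorem reconstructed_groupoid_general
    {G H : Type*} [Group G] [Group H] (cm : CrossedModule G H)
    {X I : Type*} (U : I → Set X)
    (c : GammaCocycle cm U)
    (hnorm_g : ∀ (i : I) (x : X), x ∈ U i → c.g i i x = 1)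
    (hnorm_a₁ : ∀ (i j : I) (x : X), x ∈ U i → x ∈ U j → c.a i i j x = 1)
    (hnorm_a₂ : ∀ (i j : I) (x : X), x ∈ U i → x ∈ U j → c.a i j j x = 1)
    (hnorm_a₃ : ∀ (i j : I) (x : X), x ∈ U i → x ∈ U j → c.a i j i x = 1) :
    -- `(i,i,x,1,g)` is a morphism from `(i,x,g)` to `(i,x,g)`
    (∀ (i : I) (x : X) (g : G), x ∈ U i →
      g = (c.g i i x)⁻¹ * cm.t (1 : H) * g) ∧
    -- the composite of a morphism `(k,x,g₁) → (j,x,g₂)` and a morphism starting at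
    -- `(j,x,g₂)` is a morphism from `(k,x,g₁)` to the target of the second one
    (∀ (i j k : I) (x : X) (h₁ h₂ : H) (g₁ g₂ : G),
      x ∈ U i → x ∈ U j → x ∈ U k →
      g₂ = (c.g j k x)⁻¹ * cm.t h₁ * g₁ →
      (c.g i k x)⁻¹ * cm.t (c.a i j k x * cm.α (c.g j k x) h₂ * h₁) * g₁ =
        (c.g i j x)⁻¹ * cm.t h₂ * g₂) ∧
    -- the composition is associative
    (∀ (i j k l : I) (x : X) (h₁ h₂ h₃ : H) (g₁ g₂ g₃ : G),
      x ∈ U i → x ∈ U j → x ∈ U k → x ∈ U l →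
      g₂ = (c.g k l x)⁻¹ * cm.t h₁ * g₁ →
      g₃ = (c.g j k x)⁻¹ * cm.t h₂ * g₂ →
      c.a i j l x * cm.α (c.g j l x) h₃ * (c.a j k l x * cm.α (c.g k l x) h₂ * h₁) =
        c.a i k l x * cm.α (c.g k l x) (c.a i j k x * cm.α (c.g j k x) h₃ * h₂) * h₁) ∧
    -- right unit: `(i,j,x,h,g) ∘ (j,j,x,1,g) = (i,j,x,h,g)`
    (∀ (i j : I) (x : X) (h : H) (g : G), x ∈ U i → x ∈ U j →
      g = (c.g j j x)⁻¹ * cm.t (1 : H) * g ∧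
      c.a i j j x * cm.α (c.g j j x) h * (1 : H) = h) ∧
    -- left unit: `(i,i,x,1,g') ∘ (i,j,x,h,g) = (i,j,x,h,g)` for `g' = g_{ij}(x)⁻¹·t(h)·g`
    (∀ (i j : I) (x : X) (h : H) (g : G), x ∈ U i → x ∈ U j →
      (c.g i j x)⁻¹ * cm.t h * g =
        (c.g i i x)⁻¹ * cm.t (1 : H) * ((c.g i j x)⁻¹ * cm.t h * g) ∧
      c.a i i j x * cm.α (c.g i j x) (1 : H) * h = h) ∧
    -- every morphism `(i,j,x,h,g)` has a two-sided inverse `(j,i,x,h',g')` with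
    -- `g' := g_{ij}(x)⁻¹·t(h)·g`
    (∀ (i j : I) (x : X) (h : H) (g : G), x ∈ U i → x ∈ U j →
      ∃ h' : H,
        g = (c.g j i x)⁻¹ * cm.t h' * ((c.g i j x)⁻¹ * cm.t h * g) ∧
        c.a j i j x * cm.α (c.g i j x) h' * h = 1 ∧
        c.a i j i x * cm.α (c.g j i x) h * h' = 1) := by
  refine ⟨?_, ?_, ?_, ?_, ?_, ?_⟩
  · exact fun i x g hi ↦ (c.tgt_one (hnorm_g i x hi) g).symm
  · rintro i j k x h₁ h₂ g₁ g₂ hi hj hk rfl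
    exact c.tgt_comp hi hj hk h₂ h₁ g₁
  · exact fun i j k l x h₁ h₂ h₃ _ _ _ hi hj hk hl _ _ ↦ c.comp_assoc hi hj hk hl h₃ h₂ h₁
  · exact fun i j x h g hi hj ↦ ⟨(c.tgt_one (hnorm_g j x hj) g).symm,
      c.comp_one (hnorm_g j x hj) (hnorm_a₂ i j x hi hj) h⟩
  · exact fun i j x h g hi hj ↦ ⟨(c.tgt_one (hnorm_g i x hi) _).symm,
      c.one_comp (hnorm_a₁ i j x hi hj) h⟩
  · intro i j x h g hi hj
    have hji := c.g_swap_eq_inv hi hj (hnorm_g i x hi) (hnorm_a₃ i j x hi hj)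
    exact ⟨c.inv i j x h, (c.tgt_inv hji h g).symm, c.inv_comp (hnorm_a₃ j i x hj hi) h,
      c.comp_inv hji (hnorm_a₃ i j x hi hj) h⟩

/-- The data reconstructed from a normalized `Γ`-cocycle form a groupoid
`𝒫_{(g,a)}`: objects are triples `(i,x,g)` with `x ∈ U i` and `g ∈ G`; a morphism
from `(j,x,g)` to `(i,x,g')` is a quintuple `(i,j,x,h,g)` with
`g' = g_{ij}(x)⁻¹·t(h)·g`; the identity at `(i,x,g)` is `(i,i,x,1,g)`; and the
composition `(i,j,x,h₂,g₂)∘(j,k,x,h₁,g₁) := (i,k,x, a_{ijk}(x)·α(g_{jk}(x),h₂)·h₁, g₁)`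
is defined whenever `g₂ = g_{jk}(x)⁻¹·t(h₁)·g₁`.  The composition is well-defined on
hom-sets, associative and unital, and every morphism has a two-sided inverse. -/
theorem reconstructed_groupoid
    {G H : Type*} [Group G] [Group H] (cm : CrossedModule G H)
    {X I : Type*} (U : I → Set X) (hU : ∀ x : X, ∃ i : I, x ∈ U i)
    (c : GammaCocycle cm U)
    (hnorm_g : ∀ (i : I) (x : X), x ∈ U i → c.g i i x = 1)
    (hnorm_a₁ : ∀ (i j : I) (x : X), x ∈ U i → x ∈ U j → c.a i i j x = 1)
    (hnorm_a₂ : ∀ (i j : I) (x : X), x ∈ U i → x ∈ U j → c.a i j j x = 1)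
    (hnorm_a₃ : ∀ (i j : I) (x : X), x ∈ U i → x ∈ U j → c.a i j i x = 1) :
    -- `(i,i,x,1,g)` is a morphism from `(i,x,g)` to `(i,x,g)`
    (∀ (i : I) (x : X) (g : G), x ∈ U i →
      g = (c.g i i x)⁻¹ * cm.t (1 : H) * g) ∧
    -- the composite of a morphism `(k,x,g₁) → (j,x,g₂)` and a morphism starting at
    -- `(j,x,g₂)` is a morphism from `(k,x,g₁)` to the target of the second one
    (∀ (i j k : I) (x : X) (h₁ h₂ : H) (g₁ g₂ : G),
      x ∈ U i → x ∈ U j → x ∈ U k →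
      g₂ = (c.g j k x)⁻¹ * cm.t h₁ * g₁ →
      (c.g i k x)⁻¹ * cm.t (c.a i j k x * cm.α (c.g j k x) h₂ * h₁) * g₁ =
        (c.g i j x)⁻¹ * cm.t h₂ * g₂) ∧
    -- the composition is associative
    (∀ (i j k l : I) (x : X) (h₁ h₂ h₃ : H) (g₁ g₂ g₃ : G),
      x ∈ U i → x ∈ U j → x ∈ U k → x ∈ U l →
      g₂ = (c.g k l x)⁻¹ * cm.t h₁ * g₁ →
      g₃ = (c.g j k x)⁻¹ * cm.t h₂ * g₂ →
      c.a i j l x * cm.α (c.g j l x) h₃ * (c.a j k l x * cm.α (c.g k l x) h₂ * h₁) =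
        c.a i k l x * cm.α (c.g k l x) (c.a i j k x * cm.α (c.g j k x) h₃ * h₂) * h₁) ∧
    -- right unit: `(i,j,x,h,g) ∘ (j,j,x,1,g) = (i,j,x,h,g)`
    (∀ (i j : I) (x : X) (h : H) (g : G), x ∈ U i → x ∈ U j →
      g = (c.g j j x)⁻¹ * cm.t (1 : H) * g ∧
      c.a i j j x * cm.α (c.g j j x) h * (1 : H) = h) ∧
    -- left unit: `(i,i,x,1,g') ∘ (i,j,x,h,g) = (i,j,x,h,g)` for `g' = g_{ij}(x)⁻¹·t(h)·g`
    (∀ (i j : I) (x : X) (h : H) (g : G), x ∈ U i → x ∈ U j →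
      (c.g i j x)⁻¹ * cm.t h * g =
        (c.g i i x)⁻¹ * cm.t (1 : H) * ((c.g i j x)⁻¹ * cm.t h * g) ∧
      c.a i i j x * cm.α (c.g i j x) (1 : H) * h = h) ∧
    -- every morphism `(i,j,x,h,g)` has a two-sided inverse `(j,i,x,h',g')` with
    -- `g' := g_{ij}(x)⁻¹·t(h)·g`
    (∀ (i j : I) (x : X) (h : H) (g : G), x ∈ U i → x ∈ U j →
      ∃ h' : H,
        g = (c.g j i x)⁻¹ * cm.t h' * ((c.g i j x)⁻¹ * cm.t h * g) ∧
        c.a j i j x * cm.α (c.g i j x) h' * h = 1 ∧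
        c.a i j i x * cm.α (c.g j i x) h * h' = 1) :=
  reconstructed_groupoid_general cm U c hnorm_g hnorm_a₁ hnorm_a₂ hnorm_a₃
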